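/- arXiv:0709.1776 — 3 statements merged into one kernel-verified Lean document; each statement's English description precedes it below -/
import Mathlib

section
/- Let Ω ⊆ ℝ² be open, u : Ω → ℝ be C¹, F : Ω → ℝ² be a C¹ vector field, and assume D := |∇u + F| ≠ 0 everywhere on Ω. Then for every p ∈ Ω there exists r₁ > 0 with B_{r₁}(p) ⊆ Ω such that characteristic curves through p are unique in B_{r₁}(p): for every interval I containing 0 and any two differentiable curves γ₁, γ₂ : I → B_{r₁}(p) with γ₁(0) = γ₂(0) = p and γᵢ′(σ) = N^{u,⊥}(γᵢ(σ)) for all σ ∈ I (i = 1,2), one has γ₁ = γ₂ on I. (No condition on any prescribed curvature H is needed.) -/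
open MeasureTheory

/-- `∇u + F` as a vector field on `ℝ²`. -/
noncomputable def gradW (u : ℝ × ℝ → ℝ) (F : ℝ × ℝ → ℝ × ℝ) (p : ℝ × ℝ) : ℝ × ℝ :=
  (fderiv ℝ u p (1, 0) + (F p).1, fderiv ℝ u p (0, 1) + (F p).2)

/-- `D = |∇u + F|` (Euclidean norm). -/
noncomputable def Dd (u : ℝ × ℝ → ℝ) (F : ℝ × ℝ → ℝ × ℝ) (p : ℝ × ℝ) : ℝ :=
  Real.sqrt ((gradW u F p).1 ^ 2 + (gradW u F p).2 ^ 2)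

/-- The unit horizontal normal `N^u = (∇u + F)/D`. -/
noncomputable def Nu (u : ℝ × ℝ → ℝ) (F : ℝ × ℝ → ℝ × ℝ) (p : ℝ × ℝ) : ℝ × ℝ :=
  ((gradW u F p).1 / Dd u F p, (gradW u F p).2 / Dd u F p)

/-- `N^{u,⊥}`: rotation of `N^u` by `-π/2`. -/
noncomputable def Nperp (u : ℝ × ℝ → ℝ) (F : ℝ × ℝ → ℝ × ℝ) (p : ℝ × ℝ) : ℝ × ℝ :=
  ((Nu u F p).2, -(Nu u F p).1)

/-!
`N^⊥` spans the kernel of the merely continuous 1-form `du + F·dx`, so the characteristic field is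
not Lipschitz and Picard's argument is unavailable. Near `p` the characteristics are graphs over
the axis `N^⊥(p)`; reparametrize them by that coordinate. Write `ũ = u + F(p)·x` and
`α = (F - F(p))·dx`, so that `du + F·dx = dũ + α`. For the two graphs `q₁, q₂`, which differ by a
multiple of `N(p)`, the quantity `Ξ = ũ(q₁) - ũ(q₂) + α(q₁)(q₁ - q₂)` has derivative
`O(|q₁ - q₂|)`, because tangency turns the uncontrolled terms `dũ(qᵢ)(qᵢ')` into `-α(qᵢ)(qᵢ')`,
while `|Ξ| ≳ |q₁ - q₂|` because `ũ` increases along `N(p)` and `α` is small near `p`. Grönwall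
gives `q₁ = q₂`; the two time changes then solve the same scalar equation
`τ' = 1 / ⟨N^⊥(q), N^⊥(p)⟩` along the common trace, so they agree as well.
-/

open Set Filter Topology

theorem Convex.mul_sub_le_image_sub_of_le_hasDerivWithinAt {D : Set ℝ} (hD : Convex ℝ D)
    {f f' : ℝ → ℝ} {C : ℝ} (hf : ∀ x ∈ D, HasDerivWithinAt f (f' x) D x)
    (hC : ∀ x ∈ D, C ≤ f' x) : ∀ x ∈ D, ∀ y ∈ D, x ≤ y → C * (y - x) ≤ f y - f x := by
  have hf_int : ∀ x ∈ interior D, HasDerivAt f (f' x) x := fun x hx =>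
    (hf x (interior_subset hx)).hasDerivAt (mem_interior_iff_mem_nhds.mp hx)
  refine hD.mul_sub_le_image_sub_of_le_deriv (fun x hx => (hf x hx).continuousWithinAt)
    (fun x hx => (hf_int x hx).differentiableAt.differentiableWithinAt) fun x hx => ?_
  rw [(hf_int x hx).deriv]
  exact hC x (interior_subset hx)

theorem HasDerivWithinAt.of_leftInvOn {f g : ℝ → ℝ} {f' a : ℝ} {s t : Set ℝ}
    (hf : HasDerivWithinAt f f' t (g a)) (hf' : f' ≠ 0) (hg : ContinuousWithinAt g s a)
    (hgst : MapsTo g s t) (hfg : ∀ y ∈ s, f (g y) = y) (ha : a ∈ s) :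
    HasDerivWithinAt g f'⁻¹ s a := by
  have hf_equiv : HasFDerivWithinAt f
      (ContinuousLinearEquiv.unitsEquivAut ℝ (Units.mk0 f' hf') : ℝ →L[ℝ] ℝ) t (g a) := hf
  simpa using (hf_equiv.of_local_left_inverse (hg.tendsto_nhdsWithin hgst) ha
    (eventually_nhdsWithin_of_forall hfg)).hasDerivWithinAt

theorem exists_leftInvOn_hasDerivWithinAt {x x' : ℝ → ℝ} {T c : ℝ} (hT : 0 ≤ T) (hc : 0 < c)
    (hx : ∀ σ ∈ Icc 0 T, HasDerivWithinAt x (x' σ) (Icc 0 T) σ)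
    (hcx : ∀ σ ∈ Icc 0 T, c ≤ x' σ) :
    x 0 ≤ x T ∧ ∃ τ : ℝ → ℝ, MapsTo τ (Icc (x 0) (x T)) (Icc 0 T) ∧
      (∀ ξ ∈ Icc (x 0) (x T), x (τ ξ) = ξ) ∧ (∀ σ ∈ Icc 0 T, τ (x σ) = σ) ∧
      ∀ ξ ∈ Icc (x 0) (x T), HasDerivWithinAt τ (x' (τ ξ))⁻¹ (Icc (x 0) (x T)) ξ := by
  set J := Icc (x 0) (x T)
  have hgrowth := (convex_Icc 0 T).mul_sub_le_image_sub_of_le_hasDerivWithinAt hx hcx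
  have hinj : InjOn x (Icc 0 T) := fun σ hσ σ' hσ' h => by
    rcases le_total σ σ' with hle | hle
    · nlinarith [hgrowth σ hσ σ' hσ' hle]
    · nlinarith [hgrowth σ' hσ' σ hσ hle]
  have hsurj : SurjOn x (Icc 0 T) J :=
    intermediate_value_Icc hT fun σ hσ => (hx σ hσ).continuousWithinAt
  set τ := Function.invFunOn x (Icc 0 T)
  have hmaps : MapsTo τ J (Icc 0 T) := hsurj.mapsTo_invFunOn
  have hright : ∀ ξ ∈ J, x (τ ξ) = ξ := fun ξ hξ => hsurj.rightInvOn_invFunOn hξ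
  have hlip : LipschitzOnWith (Real.toNNReal c⁻¹) τ J := by
    refine LipschitzOnWith.of_dist_le' fun ξ hξ ξ' hξ' => ?_
    rw [Real.dist_eq, Real.dist_eq, le_inv_mul_iff₀ hc]
    rcases le_total (τ ξ) (τ ξ') with hle | hle
    · have := hgrowth _ (hmaps hξ) _ (hmaps hξ') hle
      rw [hright ξ hξ, hright ξ' hξ'] at this
      rw [abs_sub_comm, abs_of_nonneg (sub_nonneg.mpr hle), abs_sub_comm]
      exact this.trans (le_abs_self _)
    · have := hgrowth _ (hmaps hξ') _ (hmaps hξ) hle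
      rw [hright ξ hξ, hright ξ' hξ'] at this
      rw [abs_of_nonneg (sub_nonneg.mpr hle)]
      exact this.trans (le_abs_self _)
  refine ⟨by nlinarith [hgrowth 0 ⟨le_rfl, hT⟩ T ⟨hT, le_rfl⟩ hT], τ, hmaps, hright,
    fun σ hσ => hinj.leftInvOn_invFunOn hσ, fun ξ hξ => ?_⟩
  exact (hx _ (hmaps hξ)).of_leftInvOn (hc.trans_le (hcx _ (hmaps hξ))).ne'
    (hlip.continuousOn ξ hξ) hmaps hright hξ

section NormedSpace

variable {E : Type*} [NormedAddCommGroup E] [NormedSpace ℝ E]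

theorem eqOn_Icc_of_hasDerivWithinAt {f g f' : ℝ → E} {a b : ℝ}
    (hf : ∀ x ∈ Icc a b, HasDerivWithinAt f (f' x) (Icc a b) x)
    (hg : ∀ x ∈ Icc a b, HasDerivWithinAt g (f' x) (Icc a b) x) (ha : f a = g a) :
    EqOn f g (Icc a b) :=
  eq_of_has_deriv_right_eq
    (fun x hx => (hf x (Ico_subset_Icc_self hx)).mono_of_mem_nhdsWithin (Icc_mem_nhdsGE_of_mem hx))
    (fun x hx => (hg x (Ico_subset_Icc_self hx)).mono_of_mem_nhdsWithin (Icc_mem_nhdsGE_of_mem hx))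
    (fun x hx => (hf x hx).continuousWithinAt) (fun x hx => (hg x hx).continuousWithinAt) ha

theorem Convex.mul_abs_le_abs_sub_of_le_fderiv_apply {s : Set E} (hs : Convex ℝ s)
    {u : E → ℝ} {n : E} {κ : ℝ} (hu : ∀ q ∈ s, DifferentiableAt ℝ u q)
    (hκ : ∀ q ∈ s, κ ≤ fderiv ℝ u q n) {q : E} (hq : q ∈ s) {t : ℝ} (ht : q + t • n ∈ s) :
    κ * |t| ≤ |u (q + t • n) - u q| := by
  set D := (fun θ : ℝ => q + θ • n) ⁻¹' s
  have hline : (fun θ : ℝ => q + θ • n) = AffineMap.lineMap q (q + n) := by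
    ext θ; simp [AffineMap.lineMap_apply, add_comm]
  have hD : Convex ℝ D := by
    simp only [D, hline]; exact hs.affine_preimage _
  have hderiv : ∀ θ ∈ D, HasDerivWithinAt (fun θ => u (q + θ • n))
      (fderiv ℝ u (q + θ • n) n) D θ := fun θ hθ => by
    have hline' : HasDerivAt (fun θ : ℝ => q + θ • n) n θ := by
      simpa using ((hasDerivAt_id θ).smul_const n).const_add q
    exact ((hu _ hθ).hasFDerivAt.comp_hasDerivAt θ hline').hasDerivWithinAt
  have hgrowth := hD.mul_sub_le_image_sub_of_le_hasDerivWithinAt hderiv fun θ hθ => hκ _ hθ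
  have h0 : (0 : ℝ) ∈ D := by simpa [D] using hq
  rcases le_total 0 t with h | h
  · have := hgrowth 0 h0 t ht h
    simp only [zero_smul, add_zero, sub_zero] at this
    rw [abs_of_nonneg h]
    exact this.trans (le_abs_self _)
  · have := hgrowth t ht 0 h0 h
    simp only [zero_smul, add_zero, zero_sub] at this
    rw [abs_of_nonpos h, abs_sub_comm]
    exact this.trans (le_abs_self _)

def kernelGap (u : E → ℝ) (α : E → E →L[ℝ] ℝ) (x y : E) : ℝ :=
  u x - u y + α x (x - y)

theorem Convex.mul_norm_sub_le_norm_mul_abs_sub {s : Set E} (hs : Convex ℝ s) {u : E → ℝ}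
    {n : E} {ℓ : E →L[ℝ] ℝ} {κ : ℝ} (hu : ∀ q ∈ s, DifferentiableAt ℝ u q)
    (hκ : ∀ q ∈ s, κ ≤ fderiv ℝ u q n) (hℓn : ∀ v, ℓ v = 0 → ∃ t : ℝ, v = t • n)
    {q q' : E} (hq : q ∈ s) (hq' : q' ∈ s) (hℓ : ℓ q = ℓ q') :
    κ * ‖q - q'‖ ≤ ‖n‖ * |u q - u q'| := by
  obtain ⟨t, ht⟩ := hℓn (q - q') (by rw [map_sub, hℓ, sub_self])
  have hq_eq : q = q' + t • n := by rw [← ht, add_sub_cancel]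
  have hgrowth := hs.mul_abs_le_abs_sub_of_le_fderiv_apply hu hκ hq' (hq_eq ▸ hq)
  rw [← hq_eq] at hgrowth
  calc κ * ‖q - q'‖ = ‖n‖ * (κ * |t|) := by rw [ht, norm_smul, Real.norm_eq_abs]; ring
    _ ≤ ‖n‖ * |u q - u q'| := mul_le_mul_of_nonneg_left hgrowth (norm_nonneg n)

theorem hasDerivWithinAt_kernelGap {u : E → ℝ} {α : E → E →L[ℝ] ℝ} {q₁ q₂ : ℝ → E}
    {w₁ w₂ : E} {J : Set ℝ} {ξ : ℝ} (hu₁ : DifferentiableAt ℝ u (q₁ ξ))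
    (hu₂ : DifferentiableAt ℝ u (q₂ ξ)) (hα : DifferentiableAt ℝ α (q₁ ξ))
    (hq₁ : HasDerivWithinAt q₁ w₁ J ξ) (hq₂ : HasDerivWithinAt q₂ w₂ J ξ)
    (hw₁ : (fderiv ℝ u (q₁ ξ) + α (q₁ ξ)) w₁ = 0) (hw₂ : (fderiv ℝ u (q₂ ξ) + α (q₂ ξ)) w₂ = 0) :
    HasDerivWithinAt (fun ξ => kernelGap u α (q₁ ξ) (q₂ ξ))
      ((α (q₂ ξ) - α (q₁ ξ)) w₂ + fderiv ℝ α (q₁ ξ) w₁ (q₁ ξ - q₂ ξ)) J ξ := by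
  have hu₁' := hu₁.hasFDerivAt.comp_hasDerivWithinAt ξ hq₁
  have hu₂' := hu₂.hasFDerivAt.comp_hasDerivWithinAt ξ hq₂
  have hα' := (hα.hasFDerivAt.comp_hasDerivWithinAt ξ hq₁).clm_apply (hq₁.sub hq₂)
  refine ((hu₁'.sub hu₂').add hα').congr_deriv ?_
  simp only [add_apply] at hw₁ hw₂
  simp only [Function.comp_apply, Pi.sub_apply, map_sub, sub_apply]
  linear_combination hw₁ - hw₂

theorem sub_mul_norm_le_abs_kernelGap {u : E → ℝ} {α : E → E →L[ℝ] ℝ} {x y : E} {κ ε : ℝ}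
    (hu : κ * ‖x - y‖ ≤ |u x - u y|) (hα : ‖α x‖ ≤ ε) :
    (κ - ε) * ‖x - y‖ ≤ |kernelGap u α x y| := by
  have hcorr : |α x (x - y)| ≤ ε * ‖x - y‖ :=
    ((α x).le_opNorm _).trans (mul_le_mul_of_nonneg_right hα (norm_nonneg _))
  have htri := abs_sub (u x - u y + α x (x - y)) (α x (x - y))
  rw [add_sub_cancel_right] at htri
  unfold kernelGap
  linarith

theorem Convex.eqOn_of_tangent_kernel {s : Set E} (hs : Convex ℝ s) {u : E → ℝ}
    {α : E → E →L[ℝ] ℝ} {L M κ ε a b : ℝ} {q₁ q₂ w₁ w₂ : ℝ → E}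
    (hu : ∀ q ∈ s, DifferentiableAt ℝ u q) (hα : ∀ q ∈ s, DifferentiableAt ℝ α q)
    (hL : ∀ q ∈ s, ‖fderiv ℝ α q‖ ≤ L) (hαε : ∀ q ∈ s, ‖α q‖ ≤ ε) (hεκ : ε < κ)
    (hq₁ : ∀ ξ ∈ Icc a b, HasDerivWithinAt q₁ (w₁ ξ) (Icc a b) ξ)
    (hq₂ : ∀ ξ ∈ Icc a b, HasDerivWithinAt q₂ (w₂ ξ) (Icc a b) ξ)
    (hs₁ : MapsTo q₁ (Icc a b) s) (hs₂ : MapsTo q₂ (Icc a b) s)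
    (hw₁ : ∀ ξ ∈ Icc a b, (fderiv ℝ u (q₁ ξ) + α (q₁ ξ)) (w₁ ξ) = 0)
    (hw₂ : ∀ ξ ∈ Icc a b, (fderiv ℝ u (q₂ ξ) + α (q₂ ξ)) (w₂ ξ) = 0)
    (hM : ∀ ξ ∈ Icc a b, ‖w₁ ξ‖ ≤ M ∧ ‖w₂ ξ‖ ≤ M)
    (hsep : ∀ ξ ∈ Icc a b, κ * ‖q₁ ξ - q₂ ξ‖ ≤ |u (q₁ ξ) - u (q₂ ξ)|)
    (ha : q₁ a = q₂ a) : EqOn q₁ q₂ (Icc a b) := by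
  set Ξ := fun ξ => kernelGap u α (q₁ ξ) (q₂ ξ)
  set Ξ' := fun ξ => (α (q₂ ξ) - α (q₁ ξ)) (w₂ ξ) + fderiv ℝ α (q₁ ξ) (w₁ ξ) (q₁ ξ - q₂ ξ)
  have hΞ : ∀ ξ ∈ Icc a b, HasDerivWithinAt Ξ (Ξ' ξ) (Icc a b) ξ := fun ξ hξ =>
    hasDerivWithinAt_kernelGap (hu _ (hs₁ hξ)) (hu _ (hs₂ hξ)) (hα _ (hs₁ hξ)) (hq₁ ξ hξ)
      (hq₂ ξ hξ) (hw₁ ξ hξ) (hw₂ ξ hξ)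
  have hΞ'_le : ∀ ξ ∈ Icc a b, ‖Ξ' ξ‖ ≤ 2 * L * M * ‖q₁ ξ - q₂ ξ‖ := by
    intro ξ hξ
    have hL₁ := hL _ (hs₁ hξ)
    obtain ⟨hM₁, hM₂⟩ := hM ξ hξ
    have hlip : ‖α (q₂ ξ) - α (q₁ ξ)‖ ≤ L * ‖q₁ ξ - q₂ ξ‖ := by
      rw [norm_sub_rev (q₁ ξ)]
      exact hs.norm_image_sub_le_of_norm_hasFDerivWithin_le
        (fun q hq => (hα q hq).hasFDerivAt.hasFDerivWithinAt) hL (hs₁ hξ) (hs₂ hξ)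
    have hL0 : 0 ≤ L := (norm_nonneg (fderiv ℝ α (q₁ ξ))).trans hL₁
    have hM0 : 0 ≤ M := (norm_nonneg _).trans hM₁
    calc ‖Ξ' ξ‖ ≤ ‖α (q₂ ξ) - α (q₁ ξ)‖ * ‖w₂ ξ‖
          + ‖fderiv ℝ α (q₁ ξ)‖ * ‖w₁ ξ‖ * ‖q₁ ξ - q₂ ξ‖ :=
        (norm_add_le _ _).trans (add_le_add ((α (q₂ ξ) - α (q₁ ξ)).le_opNorm _)
          ((fderiv ℝ α (q₁ ξ)).le_opNorm₂ _ _))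
      _ ≤ L * ‖q₁ ξ - q₂ ξ‖ * M + L * M * ‖q₁ ξ - q₂ ξ‖ := by gcongr
      _ = 2 * L * M * ‖q₁ ξ - q₂ ξ‖ := by ring
  have hΞ_ge : ∀ ξ ∈ Icc a b, (κ - ε) * ‖q₁ ξ - q₂ ξ‖ ≤ |Ξ ξ| := fun ξ hξ =>
    sub_mul_norm_le_abs_kernelGap (hsep ξ hξ) (hαε _ (hs₁ hξ))
  have hLM : ∀ ξ ∈ Icc a b, 0 ≤ 2 * L * M := fun ξ hξ => by
    have := (norm_nonneg (fderiv ℝ α (q₁ ξ))).trans (hL _ (hs₁ hξ))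
    have := (norm_nonneg (w₁ ξ)).trans (hM ξ hξ).1
    positivity
  have hκε : 0 < κ - ε := sub_pos.2 hεκ
  have hΞ_zero := eq_zero_of_abs_deriv_le_mul_abs_self_of_eq_zero_right
    (K := 2 * L * M / (κ - ε)) (fun ξ hξ => (hΞ ξ hξ).continuousWithinAt)
    (fun ξ hξ => (hΞ ξ (Ico_subset_Icc_self hξ)).mono_of_mem_nhdsWithin
      (Icc_mem_nhdsGE_of_mem hξ))
    (by simp [Ξ, kernelGap, ha]) fun ξ hξ => by
      have hξ' := Ico_subset_Icc_self hξ
      calc ‖Ξ' ξ‖ ≤ 2 * L * M * ‖q₁ ξ - q₂ ξ‖ := hΞ'_le ξ hξ'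
        _ ≤ 2 * L * M * (|Ξ ξ| / (κ - ε)) :=
          mul_le_mul_of_nonneg_left ((le_div_iff₀' hκε).2 (hΞ_ge ξ hξ')) (hLM ξ hξ')
        _ = 2 * L * M / (κ - ε) * ‖Ξ ξ‖ := by rw [Real.norm_eq_abs]; ring
  intro ξ hξ
  have := hΞ_ge ξ hξ
  rw [hΞ_zero ξ hξ, abs_zero] at this
  exact sub_eq_zero.mp (norm_le_zero_iff.mp (nonpos_of_mul_nonpos_right this hκε))

theorem exists_reparametrization_by_level {s : Set E} {V : E → E} {ℓ : E →L[ℝ] ℝ} {c T : ℝ}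
    {γ : ℝ → E} (hc : 0 < c) (hcV : ∀ q ∈ s, c ≤ ℓ (V q)) (hT : 0 ≤ T)
    (hγ : ∀ σ ∈ Icc 0 T, HasDerivWithinAt γ (V (γ σ)) (Icc 0 T) σ) (hγs : MapsTo γ (Icc 0 T) s) :
    ℓ (γ 0) ≤ ℓ (γ T) ∧ ∃ τ : ℝ → ℝ, (∀ σ ∈ Icc 0 T, τ (ℓ (γ σ)) = σ) ∧
      ∀ ξ ∈ Icc (ℓ (γ 0)) (ℓ (γ T)), τ ξ ∈ Icc 0 T ∧ ℓ (γ (τ ξ)) = ξ ∧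
        HasDerivWithinAt τ (ℓ (V (γ (τ ξ))))⁻¹ (Icc (ℓ (γ 0)) (ℓ (γ T))) ξ ∧
        HasDerivWithinAt (γ ∘ τ) ((ℓ (V (γ (τ ξ))))⁻¹ • V (γ (τ ξ)))
          (Icc (ℓ (γ 0)) (ℓ (γ T))) ξ := by
  have hlevel : ∀ σ ∈ Icc 0 T, HasDerivWithinAt (fun σ => ℓ (γ σ)) (ℓ (V (γ σ))) (Icc 0 T) σ :=
    fun σ hσ => ℓ.hasFDerivAt.comp_hasDerivWithinAt σ (hγ σ hσ)
  obtain ⟨hle, τ, hmaps, hright, hleft, hτ⟩ :=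
    exists_leftInvOn_hasDerivWithinAt hT hc hlevel fun σ hσ => hcV _ (hγs hσ)
  exact ⟨hle, τ, hleft, fun ξ hξ => ⟨hmaps hξ, hright ξ hξ, hτ ξ hξ,
    (hγ _ (hmaps hξ)).scomp ξ (hτ ξ hξ) hmaps⟩⟩

structure CharacteristicChart (s : Set E) (u : E → ℝ) (α : E → E →L[ℝ] ℝ) (V : E → E)
    (ℓ : E →L[ℝ] ℝ) : Prop where
  convex : Convex ℝ s
  differentiableAt_u : ∀ q ∈ s, DifferentiableAt ℝ u q
  differentiableAt_α : ∀ q ∈ s, DifferentiableAt ℝ α q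
  fderiv_add_apply_eq_zero : ∀ q ∈ s, (fderiv ℝ u q + α q) (V q) = 0
  bounded : ∃ L M, (∀ q ∈ s, ‖fderiv ℝ α q‖ ≤ L) ∧ ∀ q ∈ s, ‖V q‖ ≤ M
  transverse : ∃ c > 0, ∀ q ∈ s, c ≤ ℓ (V q)
  separating : ∃ κ ε, ε < κ ∧ (∀ q ∈ s, ‖α q‖ ≤ ε) ∧
    ∀ q ∈ s, ∀ q' ∈ s, ℓ q = ℓ q' → κ * ‖q - q'‖ ≤ |u q - u q'|

namespace CharacteristicChart

variable {s : Set E} {u : E → ℝ} {α : E → E →L[ℝ] ℝ} {V : E → E} {ℓ : E →L[ℝ] ℝ}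

theorem neg (h : CharacteristicChart s u α V ℓ) :
    CharacteristicChart s u α (fun q => -V q) (-ℓ) where
  convex := h.convex
  differentiableAt_u := h.differentiableAt_u
  differentiableAt_α := h.differentiableAt_α
  fderiv_add_apply_eq_zero q hq := by rw [map_neg, h.fderiv_add_apply_eq_zero q hq, neg_zero]
  bounded := by
    obtain ⟨L, M, hL, hM⟩ := h.bounded
    exact ⟨L, M, hL, fun q hq => (norm_neg (V q)).trans_le (hM q hq)⟩
  transverse := by
    obtain ⟨c, hc, hcV⟩ := h.transverse
    exact ⟨c, hc, fun q hq => by simpa using hcV q hq⟩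
  separating := by
    obtain ⟨κ, ε, hεκ, hαε, hsep⟩ := h.separating
    exact ⟨κ, ε, hεκ, hαε, fun q hq q' hq' hℓ => hsep q hq q' hq' (by simpa using hℓ)⟩

theorem eq_of_Icc (h : CharacteristicChart s u α V ℓ) {γ₁ γ₂ : ℝ → E} {T : ℝ} (hT : 0 ≤ T)
    (hγ₁ : ∀ σ ∈ Icc 0 T, HasDerivWithinAt γ₁ (V (γ₁ σ)) (Icc 0 T) σ)
    (hγ₂ : ∀ σ ∈ Icc 0 T, HasDerivWithinAt γ₂ (V (γ₂ σ)) (Icc 0 T) σ)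
    (hs₁ : MapsTo γ₁ (Icc 0 T) s) (hs₂ : MapsTo γ₂ (Icc 0 T) s) (h0 : γ₁ 0 = γ₂ 0) :
    γ₁ T = γ₂ T := by
  obtain ⟨L, M, hL, hM⟩ := h.bounded
  obtain ⟨c, hc, hcV⟩ := h.transverse
  obtain ⟨κ, ε, hεκ, hαε, hsep⟩ := h.separating
  obtain ⟨hle₁, τ₁, hleft₁, hτ₁⟩ := exists_reparametrization_by_level hc hcV hT hγ₁ hs₁
  obtain ⟨hle₂, τ₂, hleft₂, hτ₂⟩ := exists_reparametrization_by_level hc hcV hT hγ₂ hs₂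
  rw [← h0] at hle₂ hτ₂
  choose hτ₁_mem hτ₁_level hτ₁_deriv hq₁_deriv using hτ₁
  choose hτ₂_mem hτ₂_level hτ₂_deriv hq₂_deriv using hτ₂
  set a := ℓ (γ₁ 0)
  set b := min (ℓ (γ₁ T)) (ℓ (γ₂ T))
  have hJ₁ : Icc a b ⊆ Icc a (ℓ (γ₁ T)) := Icc_subset_Icc le_rfl (min_le_left _ _)
  have hJ₂ : Icc a b ⊆ Icc a (ℓ (γ₂ T)) := Icc_subset_Icc le_rfl (min_le_right _ _)
  have hτa : τ₁ a = 0 ∧ τ₂ a = 0 :=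
    ⟨hleft₁ 0 ⟨le_rfl, hT⟩, by simpa only [a, h0] using hleft₂ 0 ⟨le_rfl, hT⟩⟩
  have hs₁' : MapsTo (γ₁ ∘ τ₁) (Icc a b) s := fun ξ hξ => hs₁ (hτ₁_mem ξ (hJ₁ hξ))
  have hs₂' : MapsTo (γ₂ ∘ τ₂) (Icc a b) s := fun ξ hξ => hs₂ (hτ₂_mem ξ (hJ₂ hξ))
  have hker : ∀ q ∈ s, ∀ t : ℝ, (fderiv ℝ u q + α q) (t • V q) = 0 := fun q hq t => by
    rw [map_smul, h.fderiv_add_apply_eq_zero q hq, smul_zero]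
  have hspeed : ∀ q ∈ s, ‖(ℓ (V q))⁻¹ • V q‖ ≤ c⁻¹ * M := fun q hq => by
    rw [norm_smul, Real.norm_eq_abs, abs_inv, abs_of_pos (hc.trans_le (hcV q hq))]
    exact mul_le_mul (inv_anti₀ hc (hcV q hq)) (hM q hq) (norm_nonneg _) (inv_nonneg.2 hc.le)
  have hq : EqOn (γ₁ ∘ τ₁) (γ₂ ∘ τ₂) (Icc a b) :=
    h.convex.eqOn_of_tangent_kernel h.differentiableAt_u h.differentiableAt_α hL hαε hεκ
      (fun ξ hξ => (hq₁_deriv ξ (hJ₁ hξ)).mono hJ₁) (fun ξ hξ => (hq₂_deriv ξ (hJ₂ hξ)).mono hJ₂)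
      hs₁' hs₂' (fun ξ hξ => hker _ (hs₁' hξ) _) (fun ξ hξ => hker _ (hs₂' hξ) _)
      (fun ξ hξ => ⟨hspeed _ (hs₁' hξ), hspeed _ (hs₂' hξ)⟩)
      (fun ξ hξ => hsep _ (hs₁' hξ) _ (hs₂' hξ)
        ((hτ₁_level ξ (hJ₁ hξ)).trans (hτ₂_level ξ (hJ₂ hξ)).symm))
      (by simp only [Function.comp_apply, hτa, h0])
  have hτ : EqOn τ₁ τ₂ (Icc a b) :=
    eqOn_Icc_of_hasDerivWithinAt (fun ξ hξ => (hτ₁_deriv ξ (hJ₁ hξ)).mono hJ₁)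
      (fun ξ hξ => by
        rw [show γ₁ (τ₁ ξ) = γ₂ (τ₂ ξ) from hq hξ]
        exact (hτ₂_deriv ξ (hJ₂ hξ)).mono hJ₂)
      (hτa.1.trans hτa.2.symm)
  have hb : b ∈ Icc a b := ⟨le_min hle₁ hle₂, le_rfl⟩
  have hτb : τ₁ b = T ∧ τ₂ b = T := by
    rcases min_choice (ℓ (γ₁ T)) (ℓ (γ₂ T)) with hmin | hmin
    · have h₁ : τ₁ b = T := by rw [show b = ℓ (γ₁ T) from hmin]; exact hleft₁ T ⟨hT, le_rfl⟩
      exact ⟨h₁, (hτ hb).symm.trans h₁⟩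
    · have h₂ : τ₂ b = T := by rw [show b = ℓ (γ₂ T) from hmin]; exact hleft₂ T ⟨hT, le_rfl⟩
      exact ⟨(hτ hb).trans h₂, h₂⟩
  calc γ₁ T = γ₁ (τ₁ b) := by rw [hτb.1]
    _ = γ₂ (τ₂ b) := hq hb
    _ = γ₂ T := by rw [hτb.2]

theorem eqOn (h : CharacteristicChart s u α V ℓ) {I : Set ℝ} (hI : I.OrdConnected) (hI0 : 0 ∈ I)
    {γ₁ γ₂ : ℝ → E} (hγ₁ : ∀ σ ∈ I, HasDerivWithinAt γ₁ (V (γ₁ σ)) I σ)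
    (hγ₂ : ∀ σ ∈ I, HasDerivWithinAt γ₂ (V (γ₂ σ)) I σ) (hs₁ : MapsTo γ₁ I s)
    (hs₂ : MapsTo γ₂ I s) (h0 : γ₁ 0 = γ₂ 0) : EqOn γ₁ γ₂ I := by
  intro σ hσ
  rcases le_total 0 σ with hσ0 | hσ0
  · have hsub : Icc 0 σ ⊆ I := hI.out hI0 hσ
    exact h.eq_of_Icc hσ0 (fun t ht => (hγ₁ t (hsub ht)).mono hsub)
      (fun t ht => (hγ₂ t (hsub ht)).mono hsub) (hs₁.mono_left hsub) (hs₂.mono_left hsub) h0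
  · have hneg : MapsTo Neg.neg (Icc 0 (-σ)) I := fun t ht =>
      hI.out hσ hI0 ⟨by linarith [ht.2], by linarith [ht.1]⟩
    have hrev : ∀ γ : ℝ → E, (∀ σ ∈ I, HasDerivWithinAt γ (V (γ σ)) I σ) →
        ∀ t ∈ Icc 0 (-σ), HasDerivWithinAt (fun t => γ (-t)) (-V (γ (-t))) (Icc 0 (-σ)) t :=
      fun γ hγ t ht => by
        have := (hγ _ (hneg ht)).scomp t (hasDerivWithinAt_neg t _) hneg
        rw [neg_one_smul] at this
        exact this
    simpa using h.neg.eq_of_Icc (neg_nonneg.2 hσ0) (hrev γ₁ hγ₁) (hrev γ₂ hγ₂)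
      (hs₁.comp hneg) (hs₂.comp hneg) (by simpa using h0)

end CharacteristicChart

theorem exists_characteristicChart_ball {Ω : Set E} (hΩ : IsOpen Ω) {p : E} (hp : p ∈ Ω)
    {u : E → ℝ} {α : E → E →L[ℝ] ℝ} {V : E → E} {ℓ : E →L[ℝ] ℝ} {n : E}
    (hu : ContDiffOn ℝ 1 u Ω) (hα : ContDiffOn ℝ 1 α Ω) (hV : ContinuousAt V p)
    (hker : ∀ q ∈ Ω, (fderiv ℝ u q + α q) (V q) = 0) (hαp : α p = 0) (hℓV : 0 < ℓ (V p))
    (hn : 0 < fderiv ℝ u p n) (hℓn : ∀ v, ℓ v = 0 → ∃ t : ℝ, v = t • n) :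
    ∃ r > 0, Metric.ball p r ⊆ Ω ∧ CharacteristicChart (Metric.ball p r) u α V ℓ := by
  set d := fderiv ℝ u p n
  have hn0 : 0 < ‖n‖ := norm_pos_iff.2 fun h => by simp [d, h] at hn
  set κ := d / (2 * ‖n‖)
  have hκ : 0 < κ := by positivity
  have hΩp := hΩ.mem_nhds hp
  have hu' : ContinuousAt (fderiv ℝ u) p :=
    (hu.continuousOn_fderiv_of_isOpen hΩ le_rfl).continuousAt hΩp
  have hα' : ContinuousAt (fderiv ℝ α) p :=
    (hα.continuousOn_fderiv_of_isOpen hΩ le_rfl).continuousAt hΩp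
  have hΩ_ev := hΩ.eventually_mem hp
  have hℓV_ev : ∀ᶠ q in 𝓝 p, ℓ (V p) / 2 < ℓ (V q) :=
    (ℓ.continuous.continuousAt.comp hV).eventually (lt_mem_nhds (half_lt_self hℓV))
  have hV_ev : ∀ᶠ q in 𝓝 p, ‖V q‖ < ‖V p‖ + 1 :=
    hV.norm.eventually (gt_mem_nhds (lt_add_one _))
  have hα'_ev : ∀ᶠ q in 𝓝 p, ‖fderiv ℝ α q‖ < ‖fderiv ℝ α p‖ + 1 :=
    (ContinuousAt.norm (E := E →L[ℝ] E →L[ℝ] ℝ) hα').eventually (gt_mem_nhds (lt_add_one _))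
  have hα_ev : ∀ᶠ q in 𝓝 p, ‖α q‖ < κ / 2 :=
    (hα.continuousOn.continuousAt hΩp).norm.eventually
      (gt_mem_nhds (by simpa [hαp] using half_pos hκ))
  have hn_ev : ∀ᶠ q in 𝓝 p, d / 2 < fderiv ℝ u q n :=
    (hu'.clm_apply continuousAt_const).eventually (lt_mem_nhds (half_lt_self hn))
  obtain ⟨r, hr, hball⟩ := Metric.eventually_nhds_iff_ball.mp
    (hΩ_ev.and (hℓV_ev.and (hV_ev.and (hα'_ev.and (hα_ev.and hn_ev)))))
  choose hsub hℓV_le hV_le hα'_le hα_le hn_le using hball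
  have hdiff : ∀ q ∈ Metric.ball p r, DifferentiableAt ℝ u q := fun q hq =>
    (hu.contDiffAt (hΩ.mem_nhds (hsub q hq))).differentiableAt one_ne_zero
  refine ⟨r, hr, hsub, ⟨convex_ball p r, hdiff, fun q hq =>
    (hα.contDiffAt (hΩ.mem_nhds (hsub q hq))).differentiableAt one_ne_zero,
    fun q hq => hker q (hsub q hq),
    ⟨_, _, fun q hq => (hα'_le q hq).le, fun q hq => (hV_le q hq).le⟩,
    ⟨_, half_pos hℓV, fun q hq => (hℓV_le q hq).le⟩,
    ⟨κ, κ / 2, half_lt_self hκ, fun q hq => (hα_le q hq).le, ?_⟩⟩⟩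
  intro q hq q' hq' hℓ
  have hsep := (convex_ball p r).mul_norm_sub_le_norm_mul_abs_sub hdiff
    (fun z hz => (hn_le z hz).le) hℓn hq hq' hℓ
  calc κ * ‖q - q'‖ = d / 2 * ‖q - q'‖ / ‖n‖ := by simp only [κ]; field_simp
    _ ≤ |u q - u q'| := (div_le_iff₀' hn0).2 hsep

end NormedSpace

noncomputable def dotL : (ℝ × ℝ) →L[ℝ] (ℝ × ℝ) →L[ℝ] ℝ :=
  (ContinuousLinearMap.fst ℝ ℝ ℝ).smulRight (ContinuousLinearMap.fst ℝ ℝ ℝ) +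
    (ContinuousLinearMap.snd ℝ ℝ ℝ).smulRight (ContinuousLinearMap.snd ℝ ℝ ℝ)

@[simp]
theorem dotL_apply (a v : ℝ × ℝ) : dotL a v = a.1 * v.1 + a.2 * v.2 := by
  simp [dotL]

theorem ContinuousLinearMap.apply_eq_fst_mul_add_snd_mul (f : ℝ × ℝ →L[ℝ] ℝ) (v : ℝ × ℝ) :
    f v = v.1 * f (1, 0) + v.2 * f (0, 1) := by
  have hv : v = v.1 • ((1 : ℝ), (0 : ℝ)) + v.2 • ((0 : ℝ), (1 : ℝ)) := by ext <;> simp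
  conv_lhs => rw [hv]
  simp only [map_add, map_smul, smul_eq_mul]

theorem fderiv_add_dotL_apply (u : ℝ × ℝ → ℝ) (F : ℝ × ℝ → ℝ × ℝ) (q v : ℝ × ℝ) :
    (fderiv ℝ u q + dotL (F q)) v = dotL (gradW u F q) v := by
  rw [add_apply, (fderiv ℝ u q).apply_eq_fst_mul_add_snd_mul, dotL_apply, dotL_apply, gradW]
  ring

theorem Dd_sq (u : ℝ × ℝ → ℝ) (F : ℝ × ℝ → ℝ × ℝ) (q : ℝ × ℝ) :
    Dd u F q ^ 2 = (gradW u F q).1 ^ 2 + (gradW u F q).2 ^ 2 :=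
  Real.sq_sqrt (by positivity)

section Normal

variable {u : ℝ × ℝ → ℝ} {F : ℝ × ℝ → ℝ × ℝ} {q : ℝ × ℝ}

theorem Dd_pos (h : Dd u F q ≠ 0) : 0 < Dd u F q :=
  (Real.sqrt_nonneg _).lt_of_ne' h

theorem Nu_fst_sq_add_snd_sq (h : Dd u F q ≠ 0) : (Nu u F q).1 ^ 2 + (Nu u F q).2 ^ 2 = 1 := by
  simp only [Nu, div_pow, ← add_div, ← Dd_sq]
  exact div_self (pow_ne_zero 2 h)

theorem dotL_gradW_Nperp : dotL (gradW u F q) (Nperp u F q) = 0 := by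
  simp only [dotL_apply, Nperp, Nu]
  ring

theorem dotL_gradW_Nu (h : Dd u F q ≠ 0) : dotL (gradW u F q) (Nu u F q) = Dd u F q := by
  simp only [dotL_apply, Nu]
  field_simp
  linear_combination (Dd_sq u F q).symm

theorem dotL_Nperp_self (h : Dd u F q ≠ 0) : dotL (Nperp u F q) (Nperp u F q) = 1 := by
  simp only [dotL_apply, Nperp]
  linear_combination Nu_fst_sq_add_snd_sq h

theorem exists_eq_smul_Nu_of_dotL_Nperp_eq_zero (h : Dd u F q ≠ 0) {v : ℝ × ℝ}
    (hv : dotL (Nperp u F q) v = 0) : ∃ t : ℝ, v = t • Nu u F q := by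
  have hN := Nu_fst_sq_add_snd_sq h
  simp only [dotL_apply, Nperp] at hv
  refine ⟨dotL (Nu u F q) v, Prod.ext ?_ ?_⟩ <;>
    simp only [dotL_apply, Prod.smul_fst, Prod.smul_snd, smul_eq_mul]
  · linear_combination (-v.1) * hN + (Nu u F q).2 * hv
  · linear_combination (-v.2) * hN - (Nu u F q).1 * hv

theorem continuousOn_Nperp {Ω : Set (ℝ × ℝ)} (hΩ : IsOpen Ω) (hu : ContDiffOn ℝ 1 u Ω)
    (hF : ContDiffOn ℝ 1 F Ω) (hns : ∀ q ∈ Ω, Dd u F q ≠ 0) : ContinuousOn (Nperp u F) Ω := by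
  have hu' := hu.continuousOn_fderiv_of_isOpen hΩ le_rfl
  have hg : ContinuousOn (gradW u F) Ω :=
    ((hu'.clm_apply continuousOn_const).add hF.continuousOn.fst).prodMk
      ((hu'.clm_apply continuousOn_const).add hF.continuousOn.snd)
  have hD : ContinuousOn (Dd u F) Ω := ((hg.fst.pow 2).add (hg.snd.pow 2)).sqrt
  exact (hg.snd.div hD hns).prodMk (hg.fst.div hD hns).neg

theorem exists_characteristicChart_Nperp {Ω : Set (ℝ × ℝ)} (hΩ : IsOpen Ω)
    (hu : ContDiffOn ℝ 1 u Ω) (hF : ContDiffOn ℝ 1 F Ω) (hns : ∀ q ∈ Ω, Dd u F q ≠ 0)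
    {p : ℝ × ℝ} (hp : p ∈ Ω) :
    ∃ r > 0, Metric.ball p r ⊆ Ω ∧ CharacteristicChart (Metric.ball p r)
      (fun q => u q + dotL (F p) q) (fun q => dotL (F q - F p)) (Nperp u F)
      (dotL (Nperp u F p)) := by
  have hfderiv : ∀ q ∈ Ω, fderiv ℝ (fun q => u q + dotL (F p) q) q = fderiv ℝ u q + dotL (F p) :=
    fun q hq => by
      rw [fderiv_fun_add ((hu.contDiffAt (hΩ.mem_nhds hq)).differentiableAt one_ne_zero)
        (dotL (F p)).differentiableAt, ContinuousLinearMap.fderiv]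
  refine exists_characteristicChart_ball hΩ hp (hu.add (dotL (F p)).contDiff.contDiffOn)
    (dotL.contDiff.comp_contDiffOn (hF.sub contDiffOn_const))
    ((continuousOn_Nperp hΩ hu hF hns).continuousAt (hΩ.mem_nhds hp)) (fun q hq => ?_)
    (by simp) (by rw [dotL_Nperp_self (hns p hp)]; exact one_pos) ?_
    fun v hv => exists_eq_smul_Nu_of_dotL_Nperp_eq_zero (hns p hp) hv
  · rw [hfderiv q hq, add_assoc, ← map_add, add_sub_cancel, fderiv_add_dotL_apply,
      dotL_gradW_Nperp]
  · rw [hfderiv p hp, fderiv_add_dotL_apply, dotL_gradW_Nu (hns p hp)]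
    exact Dd_pos (hns p hp)

end Normal

theorem mem_ball_of_sq_add_sq_lt {p q : ℝ × ℝ} {r : ℝ} (hr : 0 ≤ r)
    (h : (q.1 - p.1) ^ 2 + (q.2 - p.2) ^ 2 < r ^ 2) : q ∈ Metric.ball p r := by
  rw [Metric.mem_ball, Prod.dist_eq, max_lt_iff, Real.dist_eq, Real.dist_eq]
  exact ⟨abs_lt_of_sq_lt_sq (by nlinarith [sq_nonneg (q.2 - p.2)]) hr,
    abs_lt_of_sq_lt_sq (by nlinarith [sq_nonneg (q.1 - p.1)]) hr⟩

/-- **Theorem B′**: for `u, F ∈ C¹` on a nonsingular domain, characteristic curves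
through a common point are locally unique (no condition on `H` needed). -/
theorem characteristic_curve_uniqueness_nonsingular
    (Ω : Set (ℝ × ℝ)) (hΩ : IsOpen Ω)
    (u : ℝ × ℝ → ℝ) (F : ℝ × ℝ → ℝ × ℝ)
    (hu : ContDiffOn ℝ 1 u Ω) (hF : ContDiffOn ℝ 1 F Ω)
    (hns : ∀ p ∈ Ω, Dd u F p ≠ 0)
    (p : ℝ × ℝ) (hp : p ∈ Ω) :
    ∃ r₁ > (0:ℝ),
      {q : ℝ × ℝ | (q.1 - p.1) ^ 2 + (q.2 - p.2) ^ 2 < r₁ ^ 2} ⊆ Ω ∧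
      ∀ I : Set ℝ, I.OrdConnected → (0:ℝ) ∈ I →
      ∀ γ₁ γ₂ : ℝ → ℝ × ℝ,
        (∀ σ ∈ I, ((γ₁ σ).1 - p.1) ^ 2 + ((γ₁ σ).2 - p.2) ^ 2 < r₁ ^ 2) →
        (∀ σ ∈ I, ((γ₂ σ).1 - p.1) ^ 2 + ((γ₂ σ).2 - p.2) ^ 2 < r₁ ^ 2) →
        γ₁ 0 = p → γ₂ 0 = p →
        (∀ σ ∈ I, HasDerivWithinAt γ₁ (Nperp u F (γ₁ σ)) I σ) →
        (∀ σ ∈ I, HasDerivWithinAt γ₂ (Nperp u F (γ₂ σ)) I σ) →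
        Set.EqOn γ₁ γ₂ I := by
  obtain ⟨r, hr, hball, hchart⟩ := exists_characteristicChart_Nperp hΩ hu hF hns hp
  have hdisc : ∀ q : ℝ × ℝ, (q.1 - p.1) ^ 2 + (q.2 - p.2) ^ 2 < r ^ 2 → q ∈ Metric.ball p r :=
    fun q => mem_ball_of_sq_add_sq_lt hr.le
  refine ⟨r, hr, fun q hq => hball (hdisc q hq), fun I hI hI0 γ₁ γ₂ hB₁ hB₂ h₁ h₂ hγ₁ hγ₂ => ?_⟩
  exact hchart.eqOn hI hI0 hγ₁ hγ₂ (fun σ hσ => hdisc _ (hB₁ σ hσ))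
    (fun σ hσ => hdisc _ (hB₂ σ hσ)) (h₁.trans h₂.symm)
end

section
/- Let s̃, t̃ > 0, R = [0,s̃] × [0,t̃], and let h : R → ℝ be continuous such that h_s := ∂h/∂s exists and is continuous on R and (h_s)_t := ∂h_s/∂t exists and is continuous on R. Then for every ε > 0 there exists δ₀ > 0 such that for all s₁, s₂ ∈ [0,s̃] and t₁, t₂, t₃ ∈ [0,t̃] with t₂ ≠ t₁, t₃ ≠ t₁, and |t₃ − t₁| + |t₂ − t₁| < δ₀, one has | [ (h(s₂,t₃) − h(s₂,t₁))/(t₃ − t₁) − (h(s₂,t₂) − h(s₂,t₁))/(t₂ − t₁) ] − [ (h(s₁,t₃) − h(s₁,t₁))/(t₃ − t₁) − (h(s₁,t₂) − h(s₁,t₁))/(t₂ − t₁) ] | ≤ |s₂ − s₁| · ε. -/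
/-- Mean value theorem on `[0,tT]` for a one-sided derivative: the slope between
two distinct points equals the derivative at an intermediate point `ξ`, with
`|ξ - t| ≤ |t' - t|`. -/
lemma mvt_aux (tT : ℝ) (g g' : ℝ → ℝ)
    (hg : ∀ b ∈ Set.Icc (0:ℝ) tT, HasDerivWithinAt g (g' b) (Set.Icc 0 tT) b)
    {t t' : ℝ} (ht : t ∈ Set.Icc (0:ℝ) tT) (ht' : t' ∈ Set.Icc (0:ℝ) tT)
    (hne : t' ≠ t) :
    ∃ ξ ∈ Set.Icc (0:ℝ) tT, |ξ - t| ≤ |t' - t| ∧ (g t' - g t) / (t' - t) = g' ξ := by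
  have hcont : ContinuousOn g (Set.Icc 0 tT) := fun b hb =>
    (hg b hb).continuousWithinAt
  rcases lt_or_gt_of_ne hne with hlt | hlt
  · -- t' < t
    have hsub : Set.Icc t' t ⊆ Set.Icc (0:ℝ) tT := Set.Icc_subset_Icc ht'.1 ht.2
    have hder : ∀ x ∈ Set.Ioo t' t, HasDerivAt g (g' x) x := by
      intro x hx
      have hx' : x ∈ Set.Icc (0:ℝ) tT := ⟨le_of_lt (lt_of_le_of_lt ht'.1 hx.1),
        le_of_lt (lt_of_lt_of_le hx.2 ht.2)⟩
      exact (hg x hx').hasDerivAt (Icc_mem_nhds (lt_of_le_of_lt ht'.1 hx.1)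
        (lt_of_lt_of_le hx.2 ht.2))
    obtain ⟨c, hc, hceq⟩ := exists_hasDerivAt_eq_slope g g' hlt (hcont.mono hsub) hder
    refine ⟨c, hsub (Set.mem_Icc_of_Ioo hc), ?_, ?_⟩
    · rw [abs_sub_comm c t, abs_sub_comm t' t, abs_of_pos (sub_pos.2 hc.2),
        abs_of_pos (sub_pos.2 hlt)]
      linarith [hc.1]
    · rw [hceq]
      rw [div_eq_div_iff (sub_ne_zero.2 hne) (sub_ne_zero.2 (ne_of_gt hlt))]
      ring
  · -- t < t'
    have hsub : Set.Icc t t' ⊆ Set.Icc (0:ℝ) tT := Set.Icc_subset_Icc ht.1 ht'.2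
    have hder : ∀ x ∈ Set.Ioo t t', HasDerivAt g (g' x) x := by
      intro x hx
      exact (hg x ⟨le_of_lt (lt_of_le_of_lt ht.1 hx.1),
          le_of_lt (lt_of_lt_of_le hx.2 ht'.2)⟩).hasDerivAt
        (Icc_mem_nhds (lt_of_le_of_lt ht.1 hx.1) (lt_of_lt_of_le hx.2 ht'.2))
    obtain ⟨c, hc, hceq⟩ := exists_hasDerivAt_eq_slope g g' hlt (hcont.mono hsub) hder
    refine ⟨c, hsub (Set.mem_Icc_of_Ioo hc), ?_, hceq.symm⟩
    rw [abs_of_pos (sub_pos.2 hlt), abs_of_pos (sub_pos.2 hc.1)]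
    linarith [hc.2]

/-- **Lemma 5.2 (b)**: uniform smallness of the double difference of the
`t`-difference quotients of `h` at two `s`-values. Here `sT`, `tT` denote
`s̃`, `t̃`, and `R = [0,s̃] × [0,t̃]`. -/
theorem double_difference_quotient_estimate
    (sT tT : ℝ) (hsT : 0 < sT) (htT : 0 < tT)
    (R : Set (ℝ × ℝ)) (hR : R = Set.Icc 0 sT ×ˢ Set.Icc 0 tT)
    (h hs hst : ℝ × ℝ → ℝ)
    (hcont : ContinuousOn h R)
    (hderiv_s : ∀ p ∈ R, HasDerivWithinAt (fun a => h (a, p.2)) (hs p)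
      (Set.Icc 0 sT) p.1)
    (hs_cont : ContinuousOn hs R)
    (hderiv_st : ∀ p ∈ R, HasDerivWithinAt (fun b => hs (p.1, b)) (hst p)
      (Set.Icc 0 tT) p.2)
    (hst_cont : ContinuousOn hst R) :
    ∀ ε > (0:ℝ), ∃ δ₀ > (0:ℝ),
    ∀ s₁ ∈ Set.Icc (0:ℝ) sT, ∀ s₂ ∈ Set.Icc (0:ℝ) sT,
    ∀ t₁ ∈ Set.Icc (0:ℝ) tT, ∀ t₂ ∈ Set.Icc (0:ℝ) tT, ∀ t₃ ∈ Set.Icc (0:ℝ) tT,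
      t₂ ≠ t₁ → t₃ ≠ t₁ → |t₃ - t₁| + |t₂ - t₁| < δ₀ →
      |((h (s₂, t₃) - h (s₂, t₁)) / (t₃ - t₁)
          - (h (s₂, t₂) - h (s₂, t₁)) / (t₂ - t₁))
        - ((h (s₁, t₃) - h (s₁, t₁)) / (t₃ - t₁)
          - (h (s₁, t₂) - h (s₁, t₁)) / (t₂ - t₁))|
      ≤ |s₂ - s₁| * ε := by
  intro ε hε
  -- uniform continuity of hst on the compact rectangle
  have hRcpt : IsCompact R := by
    rw [hR]; exact isCompact_Icc.prod isCompact_Icc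
  have huc : UniformContinuousOn hst R :=
    hRcpt.uniformContinuousOn_of_continuous hst_cont
  rw [Metric.uniformContinuousOn_iff] at huc
  obtain ⟨δ, hδpos, hδ⟩ := huc ε hε
  refine ⟨δ, hδpos, ?_⟩
  intro s₁ hs₁ s₂ hs₂ t₁ ht₁ t₂ ht₂ t₃ ht₃ hne2 hne3 hlt
  set F : ℝ → ℝ := fun a =>
    (h (a, t₃) - h (a, t₁)) / (t₃ - t₁) - (h (a, t₂) - h (a, t₁)) / (t₂ - t₁) with hFdef
  set F' : ℝ → ℝ := fun a =>
    (hs (a, t₃) - hs (a, t₁)) / (t₃ - t₁) - (hs (a, t₂) - hs (a, t₁)) / (t₂ - t₁)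
    with hF'def
  have memR : ∀ a ∈ Set.Icc (0:ℝ) sT, ∀ b ∈ Set.Icc (0:ℝ) tT, (a, b) ∈ R := by
    intro a ha b hb; rw [hR]; exact ⟨ha, hb⟩
  have hF : ∀ a ∈ Set.Icc (0:ℝ) sT, HasDerivWithinAt F (F' a) (Set.Icc 0 sT) a := by
    intro a ha
    have d1 := hderiv_s (a, t₁) (memR a ha t₁ ht₁)
    have d2 := hderiv_s (a, t₂) (memR a ha t₂ ht₂)
    have d3 := hderiv_s (a, t₃) (memR a ha t₃ ht₃)
    simp only at d1 d2 d3
    exact ((d3.sub d1).div_const (t₃ - t₁)).sub ((d2.sub d1).div_const (t₂ - t₁))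
  have hbound : ∀ a ∈ Set.Icc (0:ℝ) sT, ‖F' a‖ ≤ ε := by
    intro a ha
    have hg : ∀ b ∈ Set.Icc (0:ℝ) tT,
        HasDerivWithinAt (fun b => hs (a, b)) (hst (a, b)) (Set.Icc 0 tT) b := by
      intro b hb
      exact hderiv_st (a, b) (memR a ha b hb)
    obtain ⟨ξ, hξmem, hξcl, hξeq⟩ := mvt_aux tT (fun b => hs (a, b))
      (fun b => hst (a, b)) hg ht₁ ht₃ hne3
    obtain ⟨ξ', hξ'mem, hξ'cl, hξ'eq⟩ := mvt_aux tT (fun b => hs (a, b))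
      (fun b => hst (a, b)) hg ht₁ ht₂ hne2
    have hFval : F' a = hst (a, ξ) - hst (a, ξ') := by
      rw [hF'def]; simp only; rw [← hξeq, ← hξ'eq]
    rw [hFval]
    have hdist : dist ((a, ξ) : ℝ × ℝ) (a, ξ') < δ := by
      rw [Prod.dist_eq]
      simp only [dist_self, Real.dist_eq]
      have : |ξ - ξ'| ≤ |ξ - t₁| + |ξ' - t₁| := by
        calc |ξ - ξ'| = |(ξ - t₁) - (ξ' - t₁)| := by ring_nf
          _ ≤ |ξ - t₁| + |ξ' - t₁| := abs_sub _ _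
      calc max (0:ℝ) |ξ - ξ'| = |ξ - ξ'| := max_eq_right (abs_nonneg _)
        _ ≤ |ξ - t₁| + |ξ' - t₁| := this
        _ ≤ |t₃ - t₁| + |t₂ - t₁| := add_le_add hξcl hξ'cl
        _ < δ := hlt
    have := hδ (a, ξ) (memR a ha ξ hξmem) (a, ξ') (memR a ha ξ' hξ'mem) hdist
    rw [Real.dist_eq] at this
    exact le_of_lt this
  have key := Convex.norm_image_sub_le_of_norm_hasDerivWithin_le hF hbound
    (convex_Icc 0 sT) hs₁ hs₂
  rw [Real.norm_eq_abs, Real.norm_eq_abs] at key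
  calc |((h (s₂, t₃) - h (s₂, t₁)) / (t₃ - t₁)
          - (h (s₂, t₂) - h (s₂, t₁)) / (t₂ - t₁))
        - ((h (s₁, t₃) - h (s₁, t₁)) / (t₃ - t₁)
          - (h (s₁, t₂) - h (s₁, t₁)) / (t₂ - t₁))| = |F s₂ - F s₁| := rfl
    _ ≤ ε * |s₂ - s₁| := key
    _ = |s₂ - s₁| * ε := mul_comm _ _
end

section
/- Let s̃, t̃ > 0 and R = [0,s̃] × [0,t̃]. Let θ, f, y : R → ℝ satisfy: θ is continuous with |θ(s,t) − π/2| ≤ π/4 for all (s,t) ∈ R; θ_s := ∂θ/∂s exists and is continuous on R and (θ_s)_t := ∂θ_s/∂t exists and is continuous on R; f is continuous and positive on R and f_t := ∂f/∂t exists and is continuous on R; y_t := ∂y/∂t exists and is continuous on R and ∂y/∂s(s,t) = −cos θ(s,t)/f(s,t) at every point of R. Set K := max_R |(θ_s)_t|, C₁ := 1/(2 max_R f), C₂ := max_R |f_t/f²|, C₃ := 2 max_R |y_t| + 1, and M := max{ 2 s̃ K, 2(2C₃ + s̃ C₂)/(s̃ C₁) }. Then |θ(s,t₂) − θ(s,t₁)|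 ≤ M |t₂ − t₁| for all (s,t₁), (s,t₂) ∈ R; in particular, θ is uniformly Lipschitz continuous in the variable t on R. -/
/-!
Fix `s`, let `D = θ(s,t₂) - θ(s,t₁) ≥ 0` and `Δ = |t₂ - t₁|`. Since `|(θ_s)_t| ≤ K`, the
difference `θ(·,t₂) - θ(·,t₁)` moves by at most `s̃ K Δ` along `[0,s̃]`, so either
`D ≤ 2 s̃ K Δ` or this difference stays `≥ D/2` on the whole segment. In the second case, as `θ`
stays within `π/4` of `π/2`, where `cos` decreases with slope at least `1/2`, the `s`-derivative
`cos θ(·,t₁)/f(·,t₁) - cos θ(·,t₂)/f(·,t₂)` of `y(·,t₂) - y(·,t₁)` is at least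
`D/(4 max f) - C₂ Δ`; but `|y(·,t₂) - y(·,t₁)| ≤ (max |y_t|) Δ` at both ends of `[0,s̃]`, which
bounds `D` by a multiple of `Δ`.
-/

open Set Real

lemma abs_sub_le_mul_of_hasDerivWithinAt_Icc {g g' : ℝ → ℝ} {a b C u v : ℝ}
    (hg : ∀ x ∈ Icc a b, HasDerivWithinAt g (g' x) (Icc a b) x)
    (hC : ∀ x ∈ Icc a b, |g' x| ≤ C) (hu : u ∈ Icc a b) (hv : v ∈ Icc a b) :
    |g v - g u| ≤ C * |v - u| := by
  simpa only [Real.norm_eq_abs] using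
    (convex_Icc a b).norm_image_sub_le_of_norm_hasDerivWithin_le hg hC hu hv

lemma mul_sub_le_sub_of_le_hasDerivWithinAt_Icc {h h' : ℝ → ℝ} {a b C : ℝ}
    (hh : ∀ x ∈ Icc a b, HasDerivWithinAt h (h' x) (Icc a b) x)
    (hC : ∀ x ∈ Icc a b, C ≤ h' x) {u v : ℝ} (hu : u ∈ Icc a b) (hv : v ∈ Icc a b)
    (huv : u ≤ v) : C * (v - u) ≤ h v - h u := by
  have hderiv : ∀ x ∈ Icc a b,
      HasDerivWithinAt (fun x => h x - C * x) (h' x - C) (Icc a b) x := fun x hx => by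
    have := (hh x hx).sub ((hasDerivAt_id x).const_mul C).hasDerivWithinAt
    rwa [mul_one] at this
  have hmono : MonotoneOn (fun x => h x - C * x) (Icc a b) := by
    refine monotoneOn_of_hasDerivWithinAt_nonneg (f' := fun x => h' x - C) (convex_Icc a b)
      (fun x hx => (hderiv x hx).continuousWithinAt) (fun x hx => ?_) (fun x hx => ?_)
    · rw [interior_Icc] at hx ⊢
      exact (hderiv x (Ioo_subset_Icc_self hx)).mono Ioo_subset_Icc_self
    · rw [interior_Icc] at hx
      exact sub_nonneg.2 (hC x (Ioo_subset_Icc_self hx))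
  linarith [hmono hu hv huv]

lemma abs_inv_sub_inv_le_of_hasDerivWithinAt_Icc {φ φ' : ℝ → ℝ} {a b C u v : ℝ}
    (hφ : ∀ x ∈ Icc a b, HasDerivWithinAt φ (φ' x) (Icc a b) x)
    (hpos : ∀ x ∈ Icc a b, 0 < φ x) (hC : ∀ x ∈ Icc a b, |φ' x / φ x ^ 2| ≤ C)
    (hu : u ∈ Icc a b) (hv : v ∈ Icc a b) :
    |(φ v)⁻¹ - (φ u)⁻¹| ≤ C * |v - u| :=
  abs_sub_le_mul_of_hasDerivWithinAt_Icc (g' := fun x => -(φ' x / φ x ^ 2))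
    (fun x hx => by simpa only [neg_div] using (hφ x hx).inv (hpos x hx).ne')
    (fun x hx => by simpa only [abs_neg] using hC x hx) hu hv

lemma one_half_le_sin_of_abs_sub_pi_div_two_le {x : ℝ} (hx : |x - π / 2| ≤ π / 4) :
    1 / 2 ≤ sin x := by
  have hcos : cos (π / 4) ≤ cos |x - π / 2| :=
    cos_le_cos_of_nonneg_of_le_pi (abs_nonneg _) (by linarith [pi_pos]) hx
  have hsqrt : (1 : ℝ) ≤ √2 := one_le_sqrt.2 one_le_two
  rw [cos_abs, cos_sub_pi_div_two, cos_pi_div_four] at hcos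
  linarith

lemma half_sub_le_cos_sub_cos {p q : ℝ} (hp : |p - π / 2| ≤ π / 4)
    (hq : |q - π / 2| ≤ π / 4) (hpq : p ≤ q) : (q - p) / 2 ≤ cos p - cos q := by
  have hp' := abs_le.1 hp
  have hq' := abs_le.1 hq
  have key := mul_sub_le_sub_of_le_hasDerivWithinAt_Icc (h := fun x => -cos x) (h' := sin)
    (a := π / 4) (b := 3 * π / 4) (C := 1 / 2)
    (fun x _ => by
      have := (hasDerivAt_cos x).neg.hasDerivWithinAt (s := Icc (π / 4) (3 * π / 4))
      rwa [neg_neg] at this)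
    (fun x hx => one_half_le_sin_of_abs_sub_pi_div_two_le
      (abs_le.2 ⟨by linarith [hx.1], by linarith [hx.2]⟩))
    ⟨by linarith, by linarith⟩ ⟨by linarith, by linarith⟩ hpq
  linarith

lemma sub_le_cos_div_sub_cos_div {p q δ F₁ F₂ Fmax E : ℝ} (hp : |p - π / 2| ≤ π / 4)
    (hq : |q - π / 2| ≤ π / 4) (hδ : 0 ≤ δ) (hgap : δ ≤ q - p) (hF₁ : 0 < F₁)
    (hF₁max : F₁ ≤ Fmax) (hE : |F₁⁻¹ - F₂⁻¹| ≤ E) :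
    δ / (2 * Fmax) - E ≤ cos p / F₁ - cos q / F₂ := by
  have hcos : δ / 2 ≤ cos p - cos q :=
    (div_le_div_of_nonneg_right hgap zero_le_two).trans
      (half_sub_le_cos_sub_cos hp hq (by linarith))
  have hmain : δ / (2 * Fmax) ≤ (cos p - cos q) / F₁ := by
    rw [← div_div]
    exact div_le_div₀ (by linarith) hcos hF₁ hF₁max
  have hcorr : |cos q * (F₁⁻¹ - F₂⁻¹)| ≤ E := by
    rw [abs_mul]
    nlinarith [abs_cos_le_one q, abs_nonneg (F₁⁻¹ - F₂⁻¹), abs_nonneg (cos q)]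
  have hsplit : cos p / F₁ - cos q / F₂ = (cos p - cos q) / F₁ + cos q * (F₁⁻¹ - F₂⁻¹) := by
    ring
  rw [hsplit]
  linarith [(abs_le.1 hcorr).1]

section Rectangle

variable {a b c d : ℝ}

lemma abs_sub_sub_sub_le_of_hasDerivWithinAt_mixed {F F₁ F₁₂ : ℝ × ℝ → ℝ} {K : ℝ}
    (hF₁ : ∀ p ∈ Icc a b ×ˢ Icc c d, HasDerivWithinAt (fun x => F (x, p.2)) (F₁ p) (Icc a b) p.1)
    (hF₁₂ : ∀ p ∈ Icc a b ×ˢ Icc c d,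
      HasDerivWithinAt (fun y => F₁ (p.1, y)) (F₁₂ p) (Icc c d) p.2)
    (hK : ∀ p ∈ Icc a b ×ˢ Icc c d, |F₁₂ p| ≤ K) {x₀ x u v : ℝ}
    (hx₀ : x₀ ∈ Icc a b) (hx : x ∈ Icc a b) (hu : u ∈ Icc c d) (hv : v ∈ Icc c d) :
    |(F (x, v) - F (x, u)) - (F (x₀, v) - F (x₀, u))| ≤ K * |v - u| * |x - x₀| :=
  abs_sub_le_mul_of_hasDerivWithinAt_Icc (g := fun x => F (x, v) - F (x, u))
    (g' := fun x => F₁ (x, v) - F₁ (x, u))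
    (fun x hx => (hF₁ (x, v) ⟨hx, hv⟩).sub (hF₁ (x, u) ⟨hx, hu⟩))
    (fun x hx => abs_sub_le_mul_of_hasDerivWithinAt_Icc (g := fun y => F₁ (x, y))
      (fun y hy => hF₁₂ (x, y) ⟨hx, hy⟩)
      (fun y hy => hK (x, y) ⟨hx, hy⟩) hu hv) hx₀ hx

lemma mul_sub_le_of_le_theta_sub {θ f y ft yt : ℝ × ℝ → ℝ} {Fmax C₂ Ymax δ u v : ℝ}
    (hθnear : ∀ p ∈ Icc a b ×ˢ Icc c d, |θ p - π / 2| ≤ π / 4)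
    (hfpos : ∀ p ∈ Icc a b ×ˢ Icc c d, 0 < f p)
    (hFmax : ∀ p ∈ Icc a b ×ˢ Icc c d, f p ≤ Fmax)
    (hft : ∀ p ∈ Icc a b ×ˢ Icc c d, HasDerivWithinAt (fun t => f (p.1, t)) (ft p) (Icc c d) p.2)
    (hC₂ : ∀ p ∈ Icc a b ×ˢ Icc c d, |ft p / f p ^ 2| ≤ C₂)
    (hyt : ∀ p ∈ Icc a b ×ˢ Icc c d, HasDerivWithinAt (fun t => y (p.1, t)) (yt p) (Icc c d) p.2)
    (hYmax : ∀ p ∈ Icc a b ×ˢ Icc c d, |yt p| ≤ Ymax)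
    (hys : ∀ p ∈ Icc a b ×ˢ Icc c d,
      HasDerivWithinAt (fun s => y (s, p.2)) (-cos (θ p) / f p) (Icc a b) p.1)
    (hab : a ≤ b) (hu : u ∈ Icc c d) (hv : v ∈ Icc c d) (hδ : 0 ≤ δ)
    (hgap : ∀ x ∈ Icc a b, δ ≤ θ (x, v) - θ (x, u)) :
    (δ / (2 * Fmax) - C₂ * |v - u|) * (b - a) ≤ 2 * Ymax * |v - u| := by
  have hslope : ∀ x ∈ Icc a b, δ / (2 * Fmax) - C₂ * |v - u| ≤
      cos (θ (x, u)) / f (x, u) - cos (θ (x, v)) / f (x, v) := fun x hx =>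
    sub_le_cos_div_sub_cos_div (hθnear _ ⟨hx, hu⟩) (hθnear _ ⟨hx, hv⟩) hδ (hgap x hx)
      (hfpos _ ⟨hx, hu⟩) (hFmax _ ⟨hx, hu⟩)
      (by
        rw [abs_sub_comm]
        exact abs_inv_sub_inv_le_of_hasDerivWithinAt_Icc (fun t ht => hft (x, t) ⟨hx, ht⟩)
          (fun t ht => hfpos (x, t) ⟨hx, ht⟩) (fun t ht => hC₂ (x, t) ⟨hx, ht⟩) hu hv)
  have hgrowth := mul_sub_le_sub_of_le_hasDerivWithinAt_Icc
    (h := fun x => y (x, v) - y (x, u))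
    (fun x hx => ((hys (x, v) ⟨hx, hv⟩).sub (hys (x, u) ⟨hx, hu⟩)).congr_deriv (by ring))
    hslope (left_mem_Icc.2 hab) (right_mem_Icc.2 hab) hab
  have hy : ∀ x ∈ Icc a b, |y (x, v) - y (x, u)| ≤ Ymax * |v - u| := fun x hx =>
    abs_sub_le_mul_of_hasDerivWithinAt_Icc (g := fun t => y (x, t))
      (fun t ht => hyt (x, t) ⟨hx, ht⟩) (fun t ht => hYmax (x, t) ⟨hx, ht⟩) hu hv
  have ha := abs_le.1 (hy a (left_mem_Icc.2 hab))
  have hb := abs_le.1 (hy b (right_mem_Icc.2 hab))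
  linarith [ha.1, hb.2]

lemma theta_sub_le_mul_abs_sub {θ f y θs θst ft yt : ℝ × ℝ → ℝ} {K Fmax C₂ Ymax M s u v : ℝ}
    (hθnear : ∀ p ∈ Icc a b ×ˢ Icc c d, |θ p - π / 2| ≤ π / 4)
    (hθs : ∀ p ∈ Icc a b ×ˢ Icc c d,
      HasDerivWithinAt (fun s => θ (s, p.2)) (θs p) (Icc a b) p.1)
    (hθst : ∀ p ∈ Icc a b ×ˢ Icc c d,
      HasDerivWithinAt (fun t => θs (p.1, t)) (θst p) (Icc c d) p.2)
    (hK : ∀ p ∈ Icc a b ×ˢ Icc c d, |θst p| ≤ K)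
    (hfpos : ∀ p ∈ Icc a b ×ˢ Icc c d, 0 < f p)
    (hFmax : ∀ p ∈ Icc a b ×ˢ Icc c d, f p ≤ Fmax)
    (hft : ∀ p ∈ Icc a b ×ˢ Icc c d, HasDerivWithinAt (fun t => f (p.1, t)) (ft p) (Icc c d) p.2)
    (hC₂ : ∀ p ∈ Icc a b ×ˢ Icc c d, |ft p / f p ^ 2| ≤ C₂)
    (hyt : ∀ p ∈ Icc a b ×ˢ Icc c d, HasDerivWithinAt (fun t => y (p.1, t)) (yt p) (Icc c d) p.2)
    (hYmax : ∀ p ∈ Icc a b ×ˢ Icc c d, |yt p| ≤ Ymax)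
    (hys : ∀ p ∈ Icc a b ×ˢ Icc c d,
      HasDerivWithinAt (fun s => y (s, p.2)) (-cos (θ p) / f p) (Icc a b) p.1)
    (hab : a < b) (hM₁ : 2 * (b - a) * K ≤ M)
    (hM₂ : 4 * Fmax * (2 * Ymax + (b - a) * C₂) / (b - a) ≤ M)
    (hs : s ∈ Icc a b) (hu : u ∈ Icc c d) (hv : v ∈ Icc c d) :
    θ (s, v) - θ (s, u) ≤ M * |v - u| := by
  set D := θ (s, v) - θ (s, u)
  rcases le_or_gt D (2 * (b - a) * K * |v - u|) with hsmall | hlarge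
  · exact hsmall.trans (mul_le_mul_of_nonneg_right hM₁ (abs_nonneg _))
  have hK₀ : 0 ≤ K := (abs_nonneg _).trans (hK (s, u) ⟨hs, hu⟩)
  have hFmax₀ : 0 < Fmax := (hfpos (s, u) ⟨hs, hu⟩).trans_le (hFmax (s, u) ⟨hs, hu⟩)
  have hD : 0 ≤ D := le_trans (by positivity) hlarge.le
  have hgap : ∀ x ∈ Icc a b, D / 2 ≤ θ (x, v) - θ (x, u) := by
    intro x hx
    have hmixed := abs_sub_sub_sub_le_of_hasDerivWithinAt_mixed hθs hθst hK hs hx hu hv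
    have hxs : |x - s| ≤ b - a :=
      abs_sub_le_iff.2 ⟨by linarith [hx.2, hs.1], by linarith [hx.1, hs.2]⟩
    have := mul_le_mul_of_nonneg_left hxs (by positivity : 0 ≤ K * |v - u|)
    linarith [(abs_le.1 hmixed).1]
  have hsep := mul_sub_le_of_le_theta_sub hθnear hfpos hFmax hft hC₂ hyt hYmax hys hab.le hu hv
    (by positivity) hgap
  calc D ≤ 4 * Fmax * (2 * Ymax + (b - a) * C₂) / (b - a) * |v - u| := by
        rw [div_mul_eq_mul_div, le_div_iff₀ (sub_pos.2 hab)]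
        have : D / 2 / (2 * Fmax) * (4 * Fmax) = D := by field_simp; ring
        nlinarith
    _ ≤ M * |v - u| := mul_le_mul_of_nonneg_right hM₂ (abs_nonneg _)

end Rectangle

theorem theta_lipschitz_in_t_general
    (sT tT : ℝ) (hsT : 0 < sT)
    (R : Set (ℝ × ℝ)) (hR : R = Set.Icc 0 sT ×ˢ Set.Icc 0 tT)
    (θ f y θs θst ft yt : ℝ × ℝ → ℝ)
    (hθnear : ∀ p ∈ R, |θ p - Real.pi / 2| ≤ Real.pi / 4)
    (hθs : ∀ p ∈ R, HasDerivWithinAt (fun a => θ (a, p.2)) (θs p)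
      (Set.Icc 0 sT) p.1)
    (hθst : ∀ p ∈ R, HasDerivWithinAt (fun b => θs (p.1, b)) (θst p)
      (Set.Icc 0 tT) p.2)
    (hfpos : ∀ p ∈ R, 0 < f p)
    (hft : ∀ p ∈ R, HasDerivWithinAt (fun b => f (p.1, b)) (ft p)
      (Set.Icc 0 tT) p.2)
    (hyt : ∀ p ∈ R, HasDerivWithinAt (fun b => y (p.1, b)) (yt p)
      (Set.Icc 0 tT) p.2)
    (hys : ∀ p ∈ R, HasDerivWithinAt (fun a => y (a, p.2))
      (-Real.cos (θ p) / f p) (Set.Icc 0 sT) p.1)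
    (K Fmax C₂ Ymax : ℝ)
    (hK : IsGreatest ((fun p => |θst p|) '' R) K)
    (hFmax : IsGreatest (f '' R) Fmax)
    (hC₂ : IsGreatest ((fun p => |ft p / f p ^ 2|) '' R) C₂)
    (hYmax : IsGreatest ((fun p => |yt p|) '' R) Ymax)
    (C₁ C₃ M : ℝ)
    (hC₁ : C₁ = 1 / (2 * Fmax))
    (hC₃ : C₃ = 2 * Ymax + 1)
    (hM : M = max (2 * sT * K) (2 * (2 * C₃ + sT * C₂) / (sT * C₁))) :
    ∀ s t₁ t₂ : ℝ, (s, t₁) ∈ R → (s, t₂) ∈ R →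
      |θ (s, t₂) - θ (s, t₁)| ≤ M * |t₂ - t₁| := by
  have bound {g : ℝ × ℝ → ℝ} {B : ℝ} (h : IsGreatest (g '' R) B) : ∀ p ∈ R, g p ≤ B :=
    fun p hp => h.2 (mem_image_of_mem g hp)
  have hFmax₀ : 0 < Fmax := by
    obtain ⟨p, hp, rfl⟩ := hFmax.1
    exact hfpos p hp
  have hYmax₀ : 0 ≤ Ymax := by
    obtain ⟨p, hp, rfl⟩ := hYmax.1
    exact abs_nonneg _
  have hM₁ : 2 * (sT - 0) * K ≤ M := by
    rw [sub_zero, hM]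
    exact le_max_left _ _
  have hM₂ : 4 * Fmax * (2 * Ymax + (sT - 0) * C₂) / (sT - 0) ≤ M := by
    have hM' : M = max (2 * sT * K) (4 * Fmax * (2 * C₃ + sT * C₂) / sT) := by
      rw [hM, hC₁]
      field_simp
      ring_nf
    rw [sub_zero, hM', hC₃]
    refine le_max_of_le_right (div_le_div_of_nonneg_right ?_ hsT.le)
    exact mul_le_mul_of_nonneg_left (by linarith) (by positivity)
  subst hR
  intro s t₁ t₂ h₁ h₂
  have key {u v : ℝ} (hu : u ∈ Icc 0 tT) (hv : v ∈ Icc 0 tT) :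
      θ (s, v) - θ (s, u) ≤ M * |v - u| :=
    theta_sub_le_mul_abs_sub hθnear hθs hθst (bound hK) hfpos (bound hFmax) hft (bound hC₂) hyt
      (bound hYmax) hys hsT hM₁ hM₂ h₁.1 hu hv
  exact abs_sub_le_iff.2 ⟨key h₁.2 h₂.2, by rw [abs_sub_comm]; exact key h₂.2 h₁.2⟩

/-- **Lemma 5.3 (b)**: in characteristic coordinates, the angle `θ` is uniformly
Lipschitz in `t`, with explicit constant
`M = max(2 s̃ K, 2(2C₃ + s̃ C₂)/(s̃ C₁))`, where `K = max|(θ_s)_t|`,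
`C₁ = 1/(2 max f)`, `C₂ = max|f_t/f²|`, `C₃ = 2 max|y_t| + 1`.
Here `sT`, `tT` denote `s̃`, `t̃`, and `R = [0,s̃] × [0,t̃]`. -/
theorem theta_lipschitz_in_t
    (sT tT : ℝ) (hsT : 0 < sT) (htT : 0 < tT)
    (R : Set (ℝ × ℝ)) (hR : R = Set.Icc 0 sT ×ˢ Set.Icc 0 tT)
    (θ f y θs θst ft yt : ℝ × ℝ → ℝ)
    (hθc : ContinuousOn θ R)
    (hθnear : ∀ p ∈ R, |θ p - Real.pi / 2| ≤ Real.pi / 4)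
    (hθs : ∀ p ∈ R, HasDerivWithinAt (fun a => θ (a, p.2)) (θs p)
      (Set.Icc 0 sT) p.1)
    (hθsc : ContinuousOn θs R)
    (hθst : ∀ p ∈ R, HasDerivWithinAt (fun b => θs (p.1, b)) (θst p)
      (Set.Icc 0 tT) p.2)
    (hθstc : ContinuousOn θst R)
    (hfc : ContinuousOn f R) (hfpos : ∀ p ∈ R, 0 < f p)
    (hft : ∀ p ∈ R, HasDerivWithinAt (fun b => f (p.1, b)) (ft p)
      (Set.Icc 0 tT) p.2)
    (hftc : ContinuousOn ft R)
    (hyt : ∀ p ∈ R, HasDerivWithinAt (fun b => y (p.1, b)) (yt p)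
      (Set.Icc 0 tT) p.2)
    (hytc : ContinuousOn yt R)
    (hys : ∀ p ∈ R, HasDerivWithinAt (fun a => y (a, p.2))
      (-Real.cos (θ p) / f p) (Set.Icc 0 sT) p.1)
    (K Fmax C₂ Ymax : ℝ)
    (hK : IsGreatest ((fun p => |θst p|) '' R) K)
    (hFmax : IsGreatest (f '' R) Fmax)
    (hC₂ : IsGreatest ((fun p => |ft p / f p ^ 2|) '' R) C₂)
    (hYmax : IsGreatest ((fun p => |yt p|) '' R) Ymax)
    (C₁ C₃ M : ℝ)
    (hC₁ : C₁ = 1 / (2 * Fmax))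
    (hC₃ : C₃ = 2 * Ymax + 1)
    (hM : M = max (2 * sT * K) (2 * (2 * C₃ + sT * C₂) / (sT * C₁))) :
    ∀ s t₁ t₂ : ℝ, (s, t₁) ∈ R → (s, t₂) ∈ R →
      |θ (s, t₂) - θ (s, t₁)| ≤ M * |t₂ - t₁| :=
  theta_lipschitz_in_t_general sT tT hsT R hR θ f y θs θst ft yt hθnear hθs hθst hfpos hft hyt hys K
    Fmax C₂ Ymax hK hFmax hC₂ hYmax C₁ C₃ M hC₁ hC₃ hM
end
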